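/- Suppose M, Y are finite-valued random variables with |𝓜| = |𝓨| = J, and R^M, R^Y are {0,1}-valued with R^Y independent of (M, R^M) given Y and R^M independent of (Y, R^Y) given M. If P(R^M=1, R^Y=1 | M=m, Y=y) > 0 for all m,y and the J×J matrix Θ with entries Θ_{m,y} = P(M=m, Y=y, R^M=1, R^Y=1) is invertible, then both ζ(m) = P(R^M=0|M=m)/P(R^M=1|M=m) and η(y) = P(R^Y=0|Y=y)/P(R^Y=1|Y=y) are uniquely determined by the observed-data quantities P(M=m, Y=y, R^M=1, R^Y=1), P(Y=y, R^M=0, R^Y=1), P(M=m, R^M=1, R^Y=0), via the linear systems P(Y=y, R^M=0, R^Y=1) = Σ_m Θ_{m,y} ζ(m) and P(M=m, R^M=1, R^Y=0) = Σ_y Θ_{m,y} η(y); consequently P(M=m, Y=y) = Θ_{m,y} / (P(R^M=1|M=m) P(R^Y=1|Y=y)) is identified. -/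
import Mathlib


open Finset
open scoped Classical

/-- The probability of the event `A` under the probability mass function `p`. -/
noncomputable def pr {Ω : Type*} [Fintype Ω] (p : Ω → ℝ) (A : Ω → Prop) : ℝ :=
  ∑ ω, if A ω then p ω else 0


section Aux
variable {Ω : Type*} [Fintype Ω]

lemma pr_congr (p : Ω → ℝ) {A B : Ω → Prop} (h : ∀ ω, A ω ↔ B ω) :
    pr p A = pr p B := by
  unfold pr; exact Finset.sum_congr rfl fun ω _ => by simp [h ω]

lemma pr_mono (p : Ω → ℝ) (hp0 : ∀ ω, 0 ≤ p ω) {A B : Ω → Prop}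
    (h : ∀ ω, A ω → B ω) : pr p A ≤ pr p B := by
  unfold pr
  refine Finset.sum_le_sum fun ω _ => ?_
  by_cases hA : A ω
  · simp [hA, h ω hA]
  · simp only [hA, if_false]
    split <;> simp [hp0 ω]

lemma pr_split_bool (p : Ω → ℝ) (A : Ω → Prop) (R : Ω → Bool) :
    pr p A = pr p (fun ω => A ω ∧ R ω = true) + pr p (fun ω => A ω ∧ R ω = false) := by
  unfold pr
  rw [← Finset.sum_add_distrib]
  refine Finset.sum_congr rfl fun ω _ => ?_
  by_cases hA : A ω <;> cases hR : R ω <;> simp [hA, hR]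

lemma pr_partition {𝓜 : Type*} [Fintype 𝓜] (p : Ω → ℝ) (M : Ω → 𝓜) (A : Ω → Prop) :
    ∑ m, pr p (fun ω => M ω = m ∧ A ω) = pr p A := by
  unfold pr
  rw [Finset.sum_comm]
  refine Finset.sum_congr rfl fun ω _ => ?_
  by_cases hA : A ω
  · simp [hA]
  · simp [hA]

end Aux

/-- Theorem 3 (discrete case).  With `|𝓜| = |𝓨| = J`, `R^Y ⊥ (M, R^M) | Y`,
`R^M ⊥ (Y, R^Y) | M`, positivity, and the square matrix
`Θ_{m,y} = P(M=m, Y=y, R^M=1, R^Y=1)` invertible (full row and column rank):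
`ζ(m) = P(R^M=0|M=m)/P(R^M=1|M=m)` and `η(y) = P(R^Y=0|Y=y)/P(R^Y=1|Y=y)` are
the unique solutions of the corresponding linear systems, and
`P(M=m, Y=y) = Θ_{m,y} / (P(R^M=1|M=m) P(R^Y=1|Y=y))` is identified. -/


theorem both_self_mnar_identification
    {Ω 𝓜 𝓨 : Type*} [Fintype Ω] [Fintype 𝓜] [Fintype 𝓨]
    (hcard : Fintype.card 𝓜 = Fintype.card 𝓨)
    (p : Ω → ℝ) (hp0 : ∀ ω, 0 ≤ p ω) (hp1 : ∑ ω, p ω = 1)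
    (M : Ω → 𝓜) (Y : Ω → 𝓨) (RM RY : Ω → Bool)
    -- conditional independence  R^Y ⊥ (M, R^M) | Y
    (hCI1 : ∀ m y r s,
      pr p (fun ω => Y ω = y) *
          pr p (fun ω => Y ω = y ∧ M ω = m ∧ RM ω = r ∧ RY ω = s) =
        pr p (fun ω => Y ω = y ∧ RY ω = s) *
          pr p (fun ω => Y ω = y ∧ M ω = m ∧ RM ω = r))
    -- conditional independence  R^M ⊥ (Y, R^Y) | M
    (hCI2 : ∀ m y r s,
      pr p (fun ω => M ω = m) *
          pr p (fun ω => M ω = m ∧ Y ω = y ∧ RM ω = r ∧ RY ω = s) =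
        pr p (fun ω => M ω = m ∧ RM ω = r) *
          pr p (fun ω => M ω = m ∧ Y ω = y ∧ RY ω = s))
    -- positivity:  P(M=m, Y=y, R^M=1, R^Y=1) > 0 for all m, y
    (hpos : ∀ m y,
      0 < pr p (fun ω => M ω = m ∧ Y ω = y ∧ RM ω = true ∧ RY ω = true))
    -- Θ is invertible: full row rank and full column rank
    (hrow : ∀ v : 𝓜 → ℝ,
      (∀ y, ∑ m,
        pr p (fun ω => M ω = m ∧ Y ω = y ∧ RM ω = true ∧ RY ω = true) * v m = 0) →
      v = 0)
    (hcol : ∀ w : 𝓨 → ℝ,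
      (∀ m, ∑ y,
        pr p (fun ω => M ω = m ∧ Y ω = y ∧ RM ω = true ∧ RY ω = true) * w y = 0) →
      w = 0) :
    -- ζ solves its linear system
    ((∀ y, pr p (fun ω => Y ω = y ∧ RM ω = false ∧ RY ω = true) =
        ∑ m, pr p (fun ω => M ω = m ∧ Y ω = y ∧ RM ω = true ∧ RY ω = true) *
          (pr p (fun ω => RM ω = false ∧ M ω = m) /
            pr p (fun ω => RM ω = true ∧ M ω = m))) ∧
      -- and is its unique solution
      (∀ ζ' : 𝓜 → ℝ,
        (∀ y, pr p (fun ω => Y ω = y ∧ RM ω = false ∧ RY ω = true) =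
          ∑ m, pr p (fun ω => M ω = m ∧ Y ω = y ∧ RM ω = true ∧ RY ω = true) * ζ' m) →
        ζ' = fun m => pr p (fun ω => RM ω = false ∧ M ω = m) /
          pr p (fun ω => RM ω = true ∧ M ω = m))) ∧
    -- η solves its linear system
    ((∀ m, pr p (fun ω => M ω = m ∧ RM ω = true ∧ RY ω = false) =
        ∑ y, pr p (fun ω => M ω = m ∧ Y ω = y ∧ RM ω = true ∧ RY ω = true) *
          (pr p (fun ω => RY ω = false ∧ Y ω = y) /
            pr p (fun ω => RY ω = true ∧ Y ω = y))) ∧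
      -- and is its unique solution
      (∀ η' : 𝓨 → ℝ,
        (∀ m, pr p (fun ω => M ω = m ∧ RM ω = true ∧ RY ω = false) =
          ∑ y, pr p (fun ω => M ω = m ∧ Y ω = y ∧ RM ω = true ∧ RY ω = true) * η' y) →
        η' = fun y => pr p (fun ω => RY ω = false ∧ Y ω = y) /
          pr p (fun ω => RY ω = true ∧ Y ω = y))) ∧
    -- identification of the joint distribution
    (∀ m y, pr p (fun ω => M ω = m ∧ Y ω = y) =
      pr p (fun ω => M ω = m ∧ Y ω = y ∧ RM ω = true ∧ RY ω = true) /
        ((pr p (fun ω => RM ω = true ∧ M ω = m) / pr p (fun ω => M ω = m)) *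
          (pr p (fun ω => RY ω = true ∧ Y ω = y) / pr p (fun ω => Y ω = y)))) := by

  classical
  -- canonical Θ
  set Θ : 𝓜 → 𝓨 → ℝ := fun m y =>
    pr p (fun ω => M ω = m ∧ Y ω = y ∧ RM ω = true ∧ RY ω = true) with hΘ
  -- positivity consequences
  have hMm : ∀ m y, 0 < pr p (fun ω => M ω = m) := fun m y =>
    lt_of_lt_of_le (hpos m y) (pr_mono p hp0 fun ω h => h.1)
  have hYy : ∀ m y, 0 < pr p (fun ω => Y ω = y) := fun m y =>
    lt_of_lt_of_le (hpos m y) (pr_mono p hp0 fun ω h => h.2.1)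
  have hRMm : ∀ m y, 0 < pr p (fun ω => RM ω = true ∧ M ω = m) := fun m y =>
    lt_of_lt_of_le (hpos m y) (pr_mono p hp0 fun ω h => ⟨h.2.2.1, h.1⟩)
  have hRYy : ∀ m y, 0 < pr p (fun ω => RY ω = true ∧ Y ω = y) := fun m y =>
    lt_of_lt_of_le (hpos m y) (pr_mono p hp0 fun ω h => ⟨h.2.2.2, h.2.1⟩)
  -- key pointwise identity for ζ
  have key1 : ∀ m y, pr p (fun ω => M ω = m ∧ Y ω = y ∧ RM ω = false ∧ RY ω = true) =
      Θ m y * (pr p (fun ω => RM ω = false ∧ M ω = m) /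
        pr p (fun ω => RM ω = true ∧ M ω = m)) := by
    intro m y
    have e1 := hCI2 m y false true
    have e2 := hCI2 m y true true
    have swF : pr p (fun ω => RM ω = false ∧ M ω = m) =
        pr p (fun ω => M ω = m ∧ RM ω = false) := pr_congr p fun ω => and_comm
    have swT : pr p (fun ω => RM ω = true ∧ M ω = m) =
        pr p (fun ω => M ω = m ∧ RM ω = true) := pr_congr p fun ω => and_comm
    have hPt : pr p (fun ω => M ω = m ∧ RM ω = true) ≠ 0 := by
      rw [← swT]; exact (hRMm m y).ne'
    simp only [hΘ]
    rw [swF, swT, ← mul_div_assoc, eq_div_iff hPt]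
    refine mul_left_cancel₀ (hMm m y).ne' ?_
    linear_combination (pr p fun ω => M ω = m ∧ RM ω = true) * e1 -
      (pr p fun ω => M ω = m ∧ RM ω = false) * e2
  -- key pointwise identity for η
  have key2 : ∀ m y, pr p (fun ω => Y ω = y ∧ M ω = m ∧ RM ω = true ∧ RY ω = false) =
      Θ m y * (pr p (fun ω => RY ω = false ∧ Y ω = y) /
        pr p (fun ω => RY ω = true ∧ Y ω = y)) := by
    intro m y
    have e1 := hCI1 m y true false
    have e2 := hCI1 m y true true
    have swF : pr p (fun ω => RY ω = false ∧ Y ω = y) =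
        pr p (fun ω => Y ω = y ∧ RY ω = false) := pr_congr p fun ω => and_comm
    have swT : pr p (fun ω => RY ω = true ∧ Y ω = y) =
        pr p (fun ω => Y ω = y ∧ RY ω = true) := pr_congr p fun ω => and_comm
    have hPt : pr p (fun ω => Y ω = y ∧ RY ω = true) ≠ 0 := by
      rw [← swT]; exact (hRYy m y).ne'
    have hΘeq : Θ m y = pr p (fun ω => Y ω = y ∧ M ω = m ∧ RM ω = true ∧ RY ω = true) :=
      pr_congr p fun ω => by tauto
    rw [swF, swT, hΘeq, ← mul_div_assoc, eq_div_iff hPt]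
    refine mul_left_cancel₀ (hYy m y).ne' ?_
    linear_combination (pr p fun ω => Y ω = y ∧ RY ω = true) * e1 -
      (pr p fun ω => Y ω = y ∧ RY ω = false) * e2
  -- ζ solves the system
  have zeta_eq : ∀ y, pr p (fun ω => Y ω = y ∧ RM ω = false ∧ RY ω = true) =
      ∑ m, Θ m y * (pr p (fun ω => RM ω = false ∧ M ω = m) /
        pr p (fun ω => RM ω = true ∧ M ω = m)) := by
    intro y
    rw [← pr_partition p M (fun ω => Y ω = y ∧ RM ω = false ∧ RY ω = true)]
    refine Finset.sum_congr rfl fun m _ => ?_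
    rw [← key1 m y]
  -- η solves the system
  have eta_eq : ∀ m, pr p (fun ω => M ω = m ∧ RM ω = true ∧ RY ω = false) =
      ∑ y, Θ m y * (pr p (fun ω => RY ω = false ∧ Y ω = y) /
        pr p (fun ω => RY ω = true ∧ Y ω = y)) := by
    intro m
    rw [← pr_partition p Y (fun ω => M ω = m ∧ RM ω = true ∧ RY ω = false)]
    refine Finset.sum_congr rfl fun y _ => ?_
    rw [← key2 m y]
  refine ⟨⟨zeta_eq, ?_⟩, ⟨eta_eq, ?_⟩, ?_⟩
  · intro ζ' hζ'
    have h0 : (fun m => ζ' m - pr p (fun ω => RM ω = false ∧ M ω = m) /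
        pr p (fun ω => RM ω = true ∧ M ω = m)) = 0 := by
      refine hrow _ fun y => ?_
      simp only [mul_sub, Finset.sum_sub_distrib]
      rw [← hζ' y, ← zeta_eq y, sub_self]
    funext m
    have := congrFun h0 m
    simp only [Pi.zero_apply, sub_eq_zero] at this
    exact this
  · intro η' hη'
    have h0 : (fun y => η' y - pr p (fun ω => RY ω = false ∧ Y ω = y) /
        pr p (fun ω => RY ω = true ∧ Y ω = y)) = 0 := by
      refine hcol _ fun m => ?_
      simp only [mul_sub, Finset.sum_sub_distrib]
      rw [← hη' m, ← eta_eq m, sub_self]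
    funext y
    have := congrFun h0 y
    simp only [Pi.zero_apply, sub_eq_zero] at this
    exact this
  · intro m y
    have e2 := hCI2 m y true true
    -- marginalize hCI1 over r to get P(Y=y) * P(M=m,Y=y,RY=1) = P(Y=y,RY=1) * P(M=m,Y=y)
    have ha : pr p (fun ω => Y ω = y) * pr p (fun ω => M ω = m ∧ Y ω = y ∧ RY ω = true) =
        pr p (fun ω => Y ω = y ∧ RY ω = true) * pr p (fun ω => M ω = m ∧ Y ω = y) := by
      have s1 : pr p (fun ω => M ω = m ∧ Y ω = y ∧ RY ω = true) =
          pr p (fun ω => Y ω = y ∧ M ω = m ∧ RM ω = true ∧ RY ω = true) +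
          pr p (fun ω => Y ω = y ∧ M ω = m ∧ RM ω = false ∧ RY ω = true) := by
        rw [pr_split_bool p (fun ω => M ω = m ∧ Y ω = y ∧ RY ω = true) RM]
        congr 1 <;> exact pr_congr p fun ω => by tauto
      have s2 : pr p (fun ω => M ω = m ∧ Y ω = y) =
          pr p (fun ω => Y ω = y ∧ M ω = m ∧ RM ω = true) +
          pr p (fun ω => Y ω = y ∧ M ω = m ∧ RM ω = false) := by
        rw [pr_split_bool p (fun ω => M ω = m ∧ Y ω = y) RM]
        congr 1 <;> exact pr_congr p fun ω => by tauto
      rw [s1, s2, mul_add, mul_add, hCI1 m y true true, hCI1 m y false true]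
    have swT : pr p (fun ω => RM ω = true ∧ M ω = m) =
        pr p (fun ω => M ω = m ∧ RM ω = true) := pr_congr p fun ω => and_comm
    have swTY : pr p (fun ω => RY ω = true ∧ Y ω = y) =
        pr p (fun ω => Y ω = y ∧ RY ω = true) := pr_congr p fun ω => and_comm
    have hPM := (hMm m y).ne'
    have hPY := (hYy m y).ne'
    have hPt : pr p (fun ω => M ω = m ∧ RM ω = true) ≠ 0 := by
      rw [← swT]; exact (hRMm m y).ne'
    have hPtY : pr p (fun ω => Y ω = y ∧ RY ω = true) ≠ 0 := by
      rw [← swTY]; exact (hRYy m y).ne'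
    rw [swT, swTY]
    field_simp
    linear_combination (-(pr p fun ω => Y ω = y)) * e2 -
      (pr p fun ω => M ω = m ∧ RM ω = true) * ha
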